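/- Consider scale-free percolation on ℤ^d with i.i.d. weights satisfying P(W > w) ≥ c w^{-(τ-1)} for all w ≥ 1 with τ > 1, and suppose α > d but γ = α(τ-1)/d ≤ 1. Then for any λ > 0, conditionally on W₀ = w with w > 0, the degree of the origin is almost surely infinite. -/

import Mathlib

/-!
Given the weights, the origin (of weight `w`) has no neighbour in a finite set `G` of vertices
with probability `∏_{y ∈ G} E[exp(-λ w W_y / |y|^α)]`. On the event `W_y > |y|^α / (λ w)`, which
has probability at least `c (λ w)^(τ-1) |y|^(-α(τ-1))`, the factor is at most `e⁻¹`; hence the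
probability is at most `exp(-κ ∑_{y ∈ G} |y|^(-α(τ-1)))` for a constant `κ > 0`. Since
`α(τ-1) ≤ d`, the series `∑_y |y|^(-α(τ-1))` diverges over `ℤ^d` (every dyadic shell contributes
a fixed amount), so `G` can be chosen outside any finite set `F` with this bound arbitrarily
small. Hence the set of neighbours of the origin is a.s. not contained in any finite set.
-/

open MeasureTheory ProbabilityTheory Real

/-- Euclidean norm on the lattice `ℤ^d`. -/
noncomputable def znorm (d : ℕ) (x : Fin d → ℤ) : ℝ :=
  Real.sqrt (∑ i, ((x i : ℝ)) ^ 2)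

/-- A pair of finite sets of ordered pairs of vertices represents a valid collection of
(distinct) edges: no loops, no repetitions (also up to swapping), and disjointness. -/
def OkPairs {V : Type*} [DecidableEq V] (S T : Finset (V × V)) : Prop :=
  (∀ p ∈ S ∪ T, p.1 ≠ p.2) ∧ (∀ p ∈ S ∪ T, p.swap ∉ S ∪ T) ∧ Disjoint S T

open scoped ENNReal

section Lattice

variable {d : ℕ}

lemma znorm_nonneg (x : Fin d → ℤ) : 0 ≤ znorm d x := Real.sqrt_nonneg _

@[simp]
lemma znorm_neg (x : Fin d → ℤ) : znorm d (-x) = znorm d x := by simp [znorm]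

lemma abs_le_znorm (x : Fin d → ℤ) (i : Fin d) : |(x i : ℝ)| ≤ znorm d x := by
  rw [← Real.sqrt_sq_eq_abs]
  exact Real.sqrt_le_sqrt
    (Finset.single_le_sum (fun j _ => sq_nonneg (x j : ℝ)) (Finset.mem_univ i))

lemma znorm_le_of_forall_abs_le {x : Fin d → ℤ} {M : ℝ} (hM : 0 ≤ M)
    (h : ∀ i, |(x i : ℝ)| ≤ M) : znorm d x ≤ Real.sqrt d * M := by
  rw [← Real.sqrt_sq hM, ← Real.sqrt_mul (Nat.cast_nonneg d)]
  refine Real.sqrt_le_sqrt ?_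
  calc ∑ i, (x i : ℝ) ^ 2 ≤ ∑ _i : Fin d, M ^ 2 :=
        Finset.sum_le_sum fun i _ => sq_le_sq' (abs_le.mp (h i)).1 (abs_le.mp (h i)).2
    _ = d * M ^ 2 := by simp

lemma lt_znorm_of_notMem_box {r : ℕ} {x : Fin d → ℤ}
    (hx : x ∉ Fintype.piFinset fun _ => Finset.Icc (-(r : ℤ)) r) : (r : ℝ) < znorm d x := by
  obtain ⟨i, hi⟩ : ∃ i, x i ∉ Finset.Icc (-(r : ℤ)) r := by
    simpa [Fintype.mem_piFinset] using hx
  have hr : (r : ℤ) < |x i| := by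
    by_contra! h
    exact hi (Finset.mem_Icc.mpr (abs_le.mp h))
  exact lt_of_lt_of_le (by exact_mod_cast hr) (abs_le_znorm x i)

lemma tendsto_znorm_cofinite_atTop : Filter.Tendsto (znorm d) Filter.cofinite Filter.atTop := by
  refine Filter.tendsto_atTop.mpr fun R => Filter.eventually_cofinite.mpr ?_
  obtain ⟨r, hr⟩ := exists_nat_ge R
  refine (Fintype.piFinset fun _ => Finset.Icc (-(r : ℤ)) r).finite_toSet.subset fun y hy => ?_
  by_contra hbox
  exact hy (hr.trans (lt_znorm_of_notMem_box hbox).le)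

noncomputable def dyadicShell (d n : ℕ) : Finset (Fin d → ℤ) :=
  Fintype.piFinset fun _ => Finset.Icc ((2 : ℤ) ^ n + 1) (2 ^ (n + 1))

lemma mem_dyadicShell {n : ℕ} {y : Fin d → ℤ} :
    y ∈ dyadicShell d n ↔ ∀ i, (2 : ℤ) ^ n + 1 ≤ y i ∧ y i ≤ 2 ^ (n + 1) := by
  simp [dyadicShell, Fintype.mem_piFinset]

lemma card_dyadicShell (d n : ℕ) : (dyadicShell d n).card = (2 ^ n) ^ d := by
  have h : (2 : ℤ) ^ (n + 1) + 1 - (2 ^ n + 1) = ((2 ^ n : ℕ) : ℤ) := by push_cast; ring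
  simp only [dyadicShell, Fintype.card_piFinset, Int.card_Icc, h, Int.toNat_natCast,
    Finset.prod_const, Finset.card_univ, Fintype.card_fin]

lemma disjoint_dyadicShell (hd : 1 ≤ d) {n m : ℕ} (hnm : n < m) :
    Disjoint (dyadicShell d n) (dyadicShell d m) := by
  refine Finset.disjoint_left.mpr fun y hn hm => ?_
  have h1 := ((mem_dyadicShell.mp hn) ⟨0, hd⟩).2
  have h2 := ((mem_dyadicShell.mp hm) ⟨0, hd⟩).1
  have : (2 : ℤ) ^ (n + 1) ≤ 2 ^ m := pow_le_pow_right₀ (by norm_num) hnm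
  omega

lemma two_pow_le_znorm_of_mem_dyadicShell (hd : 1 ≤ d) {n : ℕ} {y : Fin d → ℤ}
    (hy : y ∈ dyadicShell d n) : (2 : ℝ) ^ n ≤ znorm d y := by
  have h : ((2 : ℤ) ^ n + 1 : ℝ) ≤ y ⟨0, hd⟩ := by exact_mod_cast ((mem_dyadicShell.mp hy) _).1
  push_cast at h
  calc (2 : ℝ) ^ n ≤ |(y ⟨0, hd⟩ : ℝ)| := by linarith [le_abs_self (y ⟨0, hd⟩ : ℝ)]
    _ ≤ znorm d y := abs_le_znorm y _

lemma znorm_le_of_mem_dyadicShell {n : ℕ} {y : Fin d → ℤ} (hy : y ∈ dyadicShell d n) :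
    znorm d y ≤ Real.sqrt d * 2 ^ (n + 1) := by
  refine znorm_le_of_forall_abs_le (by positivity) fun i => ?_
  obtain ⟨h1, h2⟩ := (mem_dyadicShell.mp hy) i
  have h0 : (0 : ℤ) ≤ y i := le_trans (by positivity) h1
  rw [abs_of_nonneg (by exact_mod_cast h0)]
  exact_mod_cast h2

lemma rpow_neg_le_sum_dyadicShell (hd : 1 ≤ d) (n : ℕ) {β : ℝ} (hβ0 : 0 ≤ β) (hβd : β ≤ d) :
    (2 * Real.sqrt d) ^ (-β) ≤ ∑ y ∈ dyadicShell d n, znorm d y ^ (-β) := by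
  have hs : 0 < Real.sqrt d := Real.sqrt_pos.mpr (by exact_mod_cast hd)
  have h2n : (1 : ℝ) ≤ 2 ^ n := one_le_pow₀ one_le_two
  have hterm : ∀ y ∈ dyadicShell d n, (Real.sqrt d * 2 ^ (n + 1)) ^ (-β) ≤ znorm d y ^ (-β) :=
    fun y hy => Real.rpow_le_rpow_of_nonpos
      (lt_of_lt_of_le (by positivity) (two_pow_le_znorm_of_mem_dyadicShell hd hy))
      (znorm_le_of_mem_dyadicShell hy) (neg_nonpos.mpr hβ0)
  have hcount : (1 : ℝ) ≤ ((2 : ℝ) ^ n) ^ (d : ℝ) * ((2 : ℝ) ^ n) ^ (-β) := by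
    rw [← Real.rpow_add (by positivity)]
    exact Real.one_le_rpow h2n (by linarith)
  calc (2 * Real.sqrt d) ^ (-β)
      ≤ ((2 : ℝ) ^ n) ^ (d : ℝ) * ((2 : ℝ) ^ n) ^ (-β) * (2 * Real.sqrt d) ^ (-β) :=
        le_mul_of_one_le_left (by positivity) hcount
    _ = (dyadicShell d n).card • (Real.sqrt d * 2 ^ (n + 1)) ^ (-β) := by
        rw [card_dyadicShell, nsmul_eq_mul, pow_succ, Real.mul_rpow hs.le (by positivity),
          Real.mul_rpow (by positivity : (0 : ℝ) ≤ 2 ^ n) zero_le_two,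
          Real.mul_rpow zero_le_two hs.le]
        push_cast
        rw [Real.rpow_natCast]
        ring
    _ ≤ ∑ y ∈ dyadicShell d n, znorm d y ^ (-β) := Finset.card_nsmul_le_sum _ _ _ hterm

lemma not_summable_znorm_rpow_neg (hd : 1 ≤ d) {β : ℝ} (hβ0 : 0 ≤ β) (hβd : β ≤ d) :
    ¬Summable fun y : Fin d → ℤ => znorm d y ^ (-β) := by
  intro hsum
  have hε : 0 < (2 * Real.sqrt d) ^ (-β) := by
    have : 0 < Real.sqrt d := Real.sqrt_pos.mpr (by exact_mod_cast hd)
    positivity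
  obtain ⟨N, hN⟩ := exists_nat_gt ((∑' y, znorm d y ^ (-β)) / (2 * Real.sqrt d) ^ (-β))
  have hdisj : (↑(Finset.range N) : Set ℕ).PairwiseDisjoint (dyadicShell d) := fun n _ m _ hnm =>
    hnm.lt_or_gt.elim (disjoint_dyadicShell hd) fun h => (disjoint_dyadicShell hd h).symm
  have : N * (2 * Real.sqrt d) ^ (-β) ≤ ∑' y, znorm d y ^ (-β) :=
    calc N * (2 * Real.sqrt d) ^ (-β)
        ≤ ∑ n ∈ Finset.range N, ∑ y ∈ dyadicShell d n, znorm d y ^ (-β) := by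
          simpa using Finset.sum_le_sum (s := Finset.range N) fun n _ =>
            rpow_neg_le_sum_dyadicShell hd n hβ0 hβd
      _ = ∑ y ∈ (Finset.range N).biUnion (dyadicShell d), znorm d y ^ (-β) :=
          (Finset.sum_biUnion hdisj).symm
      _ ≤ ∑' y, znorm d y ^ (-β) :=
          hsum.sum_le_tsum _ fun y _ => Real.rpow_nonneg (znorm_nonneg y) _
  rw [div_lt_iff₀ hε] at hN
  linarith

end Lattice

lemma exists_finset_forall_le_sum_of_not_summable {ι : Type*} {f : ι → ℝ} (hf0 : 0 ≤ f)
    (hf : ¬Summable f) {p : ι → Prop} (hp : ∀ᶠ i in Filter.cofinite, p i) (M : ℝ) :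
    ∃ G : Finset ι, (∀ i ∈ G, p i) ∧ M ≤ ∑ i ∈ G, f i := by
  classical
  set F := (Filter.eventually_cofinite.mp hp).toFinset
  by_contra! hsmall
  have hG : ∀ s : Finset ι, ∀ i ∈ s \ F, p i := fun s i hi => by
    simpa [F] using (Finset.mem_sdiff.mp hi).2
  refine hf (summable_of_sum_le hf0 (c := M + ∑ i ∈ F, f i) fun s => ?_)
  calc ∑ i ∈ s, f i ≤ ∑ i ∈ s \ F ∪ F, f i :=
        Finset.sum_le_sum_of_subset_of_nonneg
          (by rw [Finset.sdiff_union_self_eq_union]; exact Finset.subset_union_left)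
          fun i _ _ => hf0 i
    _ = ∑ i ∈ s \ F, f i + ∑ i ∈ F, f i := Finset.sum_union Finset.sdiff_disjoint
    _ ≤ M + ∑ i ∈ F, f i := by linarith [hsmall (s \ F) (hG s)]

lemma prod_ofReal_one_sub_le_ofReal_exp_neg_sum {ι : Type*} (s : Finset ι) (x : ι → ℝ) :
    ∏ i ∈ s, ENNReal.ofReal (1 - x i) ≤ ENNReal.ofReal (exp (-∑ i ∈ s, x i)) := by
  calc ∏ i ∈ s, ENNReal.ofReal (1 - x i) ≤ ∏ i ∈ s, ENNReal.ofReal (exp (-x i)) :=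
        Finset.prod_le_prod' fun i _ => ENNReal.ofReal_le_ofReal (one_sub_le_exp_neg _)
    _ = ENNReal.ofReal (exp (-∑ i ∈ s, x i)) := by
        rw [← ENNReal.ofReal_prod_of_nonneg fun i _ => (exp_pos _).le, ← exp_sum,
          Finset.sum_neg_distrib]

lemma eq_zero_of_forall_le_ofReal_exp_neg {a : ℝ≥0∞} (h : ∀ M : ℝ, a ≤ ENNReal.ofReal (exp (-M))) :
    a = 0 := by
  have hlim : Filter.Tendsto (fun M : ℝ => ENNReal.ofReal (exp (-M))) Filter.atTop (nhds 0) := by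
    simpa using ENNReal.tendsto_ofReal Real.tendsto_exp_neg_atTop_nhds_zero
  exact le_antisymm (ge_of_tendsto' hlim h) bot_le

lemma ae_infinite_of_forall_finset {Ω α : Type*} [MeasurableSpace Ω] [Countable α]
    {μ : Measure Ω} (S : Ω → Set α) (h : ∀ F : Finset α, μ {ω | S ω ⊆ F} = 0) :
    ∀ᵐ ω ∂μ, (S ω).Infinite := by
  rw [ae_iff]
  refine measure_mono_null (fun ω hω => ?_) (measure_iUnion_null h)
  exact Set.mem_iUnion.mpr ⟨(Set.not_infinite.mp hω).toFinset, by simp⟩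

/-- On `{u < V}` the integrand is at most `e⁻¹`, elsewhere at most `1`. -/
lemma lintegral_ofReal_exp_neg_mul_le {Ω : Type*} [MeasurableSpace Ω] {μ : Measure Ω}
    [IsProbabilityMeasure μ] {V : Ω → ℝ} (hV : Measurable V) (hV0 : ∀ ω, 0 ≤ V ω)
    {θ u q : ℝ} (hθ : 0 ≤ θ) (hθu : 1 ≤ θ * u) (hq : ENNReal.ofReal q ≤ μ {ω | u < V ω}) :
    ∫⁻ ω, ENNReal.ofReal (exp (-(θ * V ω))) ∂μ ≤ ENNReal.ofReal (1 - (1 - exp (-1)) * q) := by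
  set s := {ω | u < V ω}
  set b := 1 - exp (-1)
  have hs : MeasurableSet s := measurableSet_lt measurable_const hV
  have hb : 0 ≤ b := sub_nonneg.mpr (exp_le_one_iff.mpr (by norm_num))
  have hb1 : ENNReal.ofReal b ≤ 1 := ENNReal.ofReal_le_one.mpr (by linarith [exp_pos (-1)])
  have hpoint : ∀ ω, ENNReal.ofReal (exp (-(θ * V ω))) ≤
      1 - s.indicator (fun _ => ENNReal.ofReal b) ω := by
    intro ω
    by_cases hω : ω ∈ s
    · rw [Set.indicator_of_mem hω, ← ENNReal.ofReal_one, ← ENNReal.ofReal_sub _ hb]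
      refine ENNReal.ofReal_le_ofReal ?_
      have : 1 ≤ θ * V ω := hθu.trans (mul_le_mul_of_nonneg_left (le_of_lt hω) hθ)
      simpa [b] using exp_le_exp.mpr (neg_le_neg this)
    · rw [Set.indicator_of_notMem hω, tsub_zero]
      exact ENNReal.ofReal_le_one.mpr (exp_le_one_iff.mpr (by nlinarith [hV0 ω]))
  calc ∫⁻ ω, ENNReal.ofReal (exp (-(θ * V ω))) ∂μ
      ≤ ∫⁻ ω, (1 - s.indicator (fun _ => ENNReal.ofReal b) ω) ∂μ := lintegral_mono hpoint
    _ = 1 - ENNReal.ofReal b * μ s := by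
        have hfin : ∫⁻ ω, s.indicator (fun _ => ENNReal.ofReal b) ω ∂μ ≠ ∞ := by
          simp [lintegral_indicator_const hs, ENNReal.mul_ne_top, measure_ne_top]
        have hle : s.indicator (fun _ => ENNReal.ofReal b) ≤ᵐ[μ] fun _ => 1 :=
          .of_forall fun ω => Set.indicator_apply_le' (fun _ => hb1) fun _ => zero_le
        rw [lintegral_sub (measurable_const.indicator hs) hfin hle]
        simp [lintegral_indicator_const hs]
    _ ≤ 1 - ENNReal.ofReal b * ENNReal.ofReal q := by gcongr
    _ ≤ ENNReal.ofReal (1 - b * q) := by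
        rw [← ENNReal.ofReal_mul hb]
        rcases le_total 0 (b * q) with hbq | hbq
        · rw [← ENNReal.ofReal_one, ← ENNReal.ofReal_sub _ hbq]
        · rw [ENNReal.ofReal_of_nonpos hbq, tsub_zero]
          exact ENNReal.one_le_ofReal.mpr (by linarith)

lemma okPairs_empty_image_prodMk {V : Type*} [DecidableEq V] {v : V} {G : Finset V}
    (hv : v ∉ G) : OkPairs ∅ (G.image (Prod.mk v)) := by
  refine ⟨?_, ?_, Finset.disjoint_empty_left _⟩ <;> simp only [Finset.empty_union, Finset.mem_image]
  · rintro _ ⟨y, hy, rfl⟩ (h : v = y)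
    exact hv (h ▸ hy)
  · rintro _ ⟨y, hy, rfl⟩ ⟨z, hz, hzy⟩
    simp only [Prod.swap_prod_mk, Prod.mk.injEq] at hzy
    exact hv (hzy.1 ▸ hy)

lemma measure_forall_not_adj_eq_lintegral {Ω : Type*} [MeasureSpace Ω] {d : ℕ}
    {α lam w : ℝ} {W : (Fin d → ℤ) → Ω → ℝ} {Ed : (Fin d → ℤ) → (Fin d → ℤ) → Ω → Bool}
    (hW0 : ∀ ω, W 0 ω = w)
    (h_model : ∀ S T : Finset ((Fin d → ℤ) × (Fin d → ℤ)), OkPairs S T →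
      ℙ {ω | (∀ p ∈ S, Ed p.1 p.2 ω = true) ∧ (∀ p ∈ T, Ed p.1 p.2 ω = false)} =
        ∫⁻ ω,
          (∏ p ∈ S, ENNReal.ofReal
            (1 - Real.exp (-(lam * W p.1 ω * W p.2 ω / znorm d (p.1 - p.2) ^ α)))) *
          ∏ p ∈ T, ENNReal.ofReal
            (Real.exp (-(lam * W p.1 ω * W p.2 ω / znorm d (p.1 - p.2) ^ α))) ∂ℙ)
    {G : Finset (Fin d → ℤ)} (hG : (0 : Fin d → ℤ) ∉ G) :
    ℙ {ω | ∀ y ∈ G, Ed 0 y ω = false} =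
      ∫⁻ ω, ∏ y ∈ G, ENNReal.ofReal (exp (-(lam * w / znorm d y ^ α * W y ω))) ∂ℙ := by
  have h := h_model ∅ (G.image (Prod.mk 0)) (okPairs_empty_image_prodMk hG)
  simp only [Finset.notMem_empty, IsEmpty.forall_iff, implies_true, true_and, Finset.prod_empty,
    one_mul, Finset.forall_mem_image,
    Finset.prod_image (Prod.mk_right_injective (0 : Fin d → ℤ)).injOn] at h
  rw [h]
  refine lintegral_congr fun ω => Finset.prod_congr rfl fun y _ => ?_
  rw [hW0, zero_sub, znorm_neg]
  ring_nf

lemma lintegral_prod_ofReal_exp_neg_le {Ω : Type*} [MeasureSpace Ω]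
    [IsProbabilityMeasure (ℙ : Measure Ω)] {d : ℕ} {α K τ c : ℝ} (hK : 0 < K)
    {W : (Fin d → ℤ) → Ω → ℝ} (hWmeas : ∀ x, Measurable (W x)) (hWnn : ∀ x ω, 0 ≤ W x ω)
    (hiid : iIndepFun W ℙ)
    (htail : ∀ x : Fin d → ℤ, x ≠ 0 → ∀ u : ℝ, 1 ≤ u →
      ENNReal.ofReal (c * u ^ (-(τ - 1))) ≤ ℙ {ω | u < W x ω})
    {G : Finset (Fin d → ℤ)} (hG : ∀ y ∈ G, y ≠ 0 ∧ K ≤ znorm d y ^ α) :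
    ∫⁻ ω, ∏ y ∈ G, ENNReal.ofReal (exp (-(K / znorm d y ^ α * W y ω))) ∂ℙ ≤
      ENNReal.ofReal (exp (-((1 - exp (-1)) * c * K ^ (τ - 1) *
        ∑ y ∈ G, znorm d y ^ (-(α * (τ - 1)))))) := by
  set X : (Fin d → ℤ) → Ω → ℝ≥0∞ := fun y ω => ENNReal.ofReal (exp (-(K / znorm d y ^ α * W y ω)))
  have hXmeas (y : Fin d → ℤ) : Measurable (X y) := by fun_prop
  have hXind : iIndepFun X ℙ :=
    hiid.comp (fun y v => ENNReal.ofReal (exp (-(K / znorm d y ^ α * v)))) fun y => by fun_prop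
  have hfactor : ∀ y ∈ G, ∫⁻ ω, X y ω ∂ℙ ≤
      ENNReal.ofReal (1 - (1 - exp (-1)) * (c * K ^ (τ - 1) * znorm d y ^ (-(α * (τ - 1))))) := by
    intro y hy
    obtain ⟨hy0, hKy⟩ := hG y hy
    have hzα : 0 < znorm d y ^ α := hK.trans_le hKy
    have hz : 0 ≤ znorm d y := znorm_nonneg y
    have hu : (znorm d y ^ α / K) ^ (-(τ - 1)) = K ^ (τ - 1) * znorm d y ^ (-(α * (τ - 1))) := by
      rw [Real.div_rpow hzα.le hK.le, ← Real.rpow_mul hz, Real.rpow_neg hK.le, div_inv_eq_mul,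
        mul_neg, mul_comm]
    have htail_y := htail y hy0 _ ((one_le_div hK).mpr hKy)
    rw [hu, ← mul_assoc] at htail_y
    exact lintegral_ofReal_exp_neg_mul_le (hWmeas y) (hWnn y) (by positivity)
      (le_of_eq (by field_simp)) htail_y
  calc ∫⁻ ω, ∏ y ∈ G, X y ω ∂ℙ = ∏ y ∈ G, ∫⁻ ω, X y ω ∂ℙ :=
        lintegral_prod_eq_prod_lintegral_of_indepFun G X hXind hXmeas
    _ ≤ ∏ y ∈ G, ENNReal.ofReal
          (1 - (1 - exp (-1)) * (c * K ^ (τ - 1) * znorm d y ^ (-(α * (τ - 1))))) :=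
        Finset.prod_le_prod' hfactor
    _ ≤ _ := by
        refine (prod_ofReal_one_sub_le_ofReal_exp_neg_sum _ _).trans_eq ?_
        rw [Finset.mul_sum]
        simp only [mul_assoc]

theorem stmt_9_general {Ω : Type*} [MeasureSpace Ω] [IsProbabilityMeasure (ℙ : Measure Ω)]
    (d : ℕ) (hd : 1 ≤ d) (α lam w τ c : ℝ) (hα : (d : ℝ) < α)
    (hτ : 1 < τ) (hc : 0 < c) (hγ : α * (τ - 1) / d ≤ 1)
    (hlam : 0 < lam) (hw : 0 < w)
    (W : (Fin d → ℤ) → Ω → ℝ) (Ed : (Fin d → ℤ) → (Fin d → ℤ) → Ω → Bool)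
    (hWmeas : ∀ x, Measurable (W x))
    (hWnn : ∀ x ω, 0 ≤ W x ω)
    -- conditioning on W₀ = w:
    (hW0 : ∀ ω, W 0 ω = w)
    (hiid : iIndepFun W ℙ)
    -- the weights satisfy P(W > u) ≥ c u^{-(τ-1)} for u ≥ 1:
    (htail : ∀ x : Fin d → ℤ, x ≠ 0 → ∀ u : ℝ, 1 ≤ u →
      ENNReal.ofReal (c * u ^ (-(τ - 1))) ≤ ℙ {ω | u < W x ω})
    -- conditionally on the weights, edges are independent with
    -- probability p_{xy} = 1 - exp(-λ W_x W_y / |x-y|^α):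
    (h_model : ∀ S T : Finset ((Fin d → ℤ) × (Fin d → ℤ)), OkPairs S T →
      ℙ {ω | (∀ p ∈ S, Ed p.1 p.2 ω = true) ∧ (∀ p ∈ T, Ed p.1 p.2 ω = false)} =
        ∫⁻ ω,
          (∏ p ∈ S, ENNReal.ofReal
            (1 - Real.exp (-(lam * W p.1 ω * W p.2 ω / znorm d (p.1 - p.2) ^ α)))) *
          ∏ p ∈ T, ENNReal.ofReal
            (Real.exp (-(lam * W p.1 ω * W p.2 ω / znorm d (p.1 - p.2) ^ α))) ∂ℙ) :
    -- the degree of the origin is almost surely infinite: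
    ∀ᵐ ω ∂ℙ, {y : Fin d → ℤ | y ≠ 0 ∧ Ed 0 y ω = true}.Infinite := by
  have hαpos : 0 < α := (Nat.cast_nonneg d).trans_lt hα
  have hβ0 : 0 ≤ α * (τ - 1) := mul_nonneg hαpos.le (by linarith)
  have hβd : α * (τ - 1) ≤ d := (div_le_one (by exact_mod_cast hd)).mp hγ
  have hK : 0 < lam * w := mul_pos hlam hw
  set κ := (1 - exp (-1)) * c * (lam * w) ^ (τ - 1)
  have hκ : 0 < κ := by
    have : exp (-1) < 1 := exp_lt_one_iff.mpr (by norm_num)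
    have : 0 < (lam * w) ^ (τ - 1) := rpow_pos_of_pos hK _
    positivity
  refine ae_infinite_of_forall_finset _ fun F => eq_zero_of_forall_le_ofReal_exp_neg fun M => ?_
  have hfar : ∀ᶠ y in Filter.cofinite, y ∉ F ∧ y ≠ 0 ∧ lam * w ≤ znorm d y ^ α :=
    F.eventually_cofinite_notMem.and <| (Filter.eventually_cofinite_ne 0).and <|
      ((tendsto_rpow_atTop hαpos).comp tendsto_znorm_cofinite_atTop).eventually_ge_atTop _
  obtain ⟨G, hG, hGM⟩ := exists_finset_forall_le_sum_of_not_summable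
    (fun y => rpow_nonneg (znorm_nonneg y) _) (not_summable_znorm_rpow_neg hd hβ0 hβd) hfar (M / κ)
  calc ℙ {ω | {y : Fin d → ℤ | y ≠ 0 ∧ Ed 0 y ω = true} ⊆ ↑F}
      ≤ ℙ {ω | ∀ y ∈ G, Ed 0 y ω = false} := measure_mono fun ω hω y hy => by
        by_contra hedge
        exact (hG y hy).1 (hω ⟨(hG y hy).2.1, by simpa using hedge⟩)
    _ = ∫⁻ ω, ∏ y ∈ G, ENNReal.ofReal (exp (-(lam * w / znorm d y ^ α * W y ω))) ∂ℙ :=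
        measure_forall_not_adj_eq_lintegral hW0 h_model fun h0 => (hG 0 h0).2.1 rfl
    _ ≤ ENNReal.ofReal (exp (-(κ * ∑ y ∈ G, znorm d y ^ (-(α * (τ - 1)))))) :=
        lintegral_prod_ofReal_exp_neg_le hK hWmeas hWnn hiid htail fun y hy => (hG y hy).2
    _ ≤ ENNReal.ofReal (exp (-M)) := by
        gcongr
        exact (div_le_iff₀' hκ).mp hGM

theorem stmt_9 {Ω : Type*} [MeasureSpace Ω] [IsProbabilityMeasure (ℙ : Measure Ω)]
    (d : ℕ) (hd : 1 ≤ d) (α lam w τ c : ℝ) (hα : (d : ℝ) < α)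
    (hτ : 1 < τ) (hc : 0 < c) (hγ : α * (τ - 1) / d ≤ 1)
    (hlam : 0 < lam) (hw : 0 < w)
    (W : (Fin d → ℤ) → Ω → ℝ) (Ed : (Fin d → ℤ) → (Fin d → ℤ) → Ω → Bool)
    (hWmeas : ∀ x, Measurable (W x))
    (hEmeas : ∀ x y, Measurable (Ed x y))
    (hWnn : ∀ x ω, 0 ≤ W x ω)
    -- conditioning on W₀ = w:
    (hW0 : ∀ ω, W 0 ω = w)
    (hiid : iIndepFun W ℙ)
    (hident : ∀ x y : Fin d → ℤ, x ≠ 0 → y ≠ 0 → IdentDistrib (W x) (W y) ℙ ℙ)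
    -- the weights satisfy P(W > u) ≥ c u^{-(τ-1)} for u ≥ 1:
    (htail : ∀ x : Fin d → ℤ, x ≠ 0 → ∀ u : ℝ, 1 ≤ u →
      ENNReal.ofReal (c * u ^ (-(τ - 1))) ≤ ℙ {ω | u < W x ω})
    -- conditionally on the weights, edges are independent with
    -- probability p_{xy} = 1 - exp(-λ W_x W_y / |x-y|^α):
    (h_model : ∀ S T : Finset ((Fin d → ℤ) × (Fin d → ℤ)), OkPairs S T →
      ℙ {ω | (∀ p ∈ S, Ed p.1 p.2 ω = true) ∧ (∀ p ∈ T, Ed p.1 p.2 ω = false)} =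
        ∫⁻ ω,
          (∏ p ∈ S, ENNReal.ofReal
            (1 - Real.exp (-(lam * W p.1 ω * W p.2 ω / znorm d (p.1 - p.2) ^ α)))) *
          ∏ p ∈ T, ENNReal.ofReal
            (Real.exp (-(lam * W p.1 ω * W p.2 ω / znorm d (p.1 - p.2) ^ α))) ∂ℙ) :
    -- the degree of the origin is almost surely infinite:
    ∀ᵐ ω ∂ℙ, {y : Fin d → ℤ | y ≠ 0 ∧ Ed 0 y ω = true}.Infinite :=
  stmt_9_general d hd α lam w τ c hα hτ hc hγ hlam hw W Ed hWmeas hWnn hW0 hiid htail h_model
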